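/- (Theorem 2, general D, entry formula) Suppose for each d there is a function g^(d) : ℤ × ℝ → ℝ such that φ^(d)_{i}(x)φ^(d)_{j}(x) = g^(d)(i+j, x) − g^(d)(i−j, x) for all i,j ∈ {1,…,m_d} and x ∈ ℝ. Then for data x₁,…,x_N ∈ ℝ^D, the entry of C = ∑_{n=1}^N ⊗_{d=1}^D φ^(d)(x_n^(d))[φ^(d)(x_n^(d))]ᵀ at ((i₁,…,i_D),(j₁,…,j_D)) equals ∑_{e ∈ {−1,1}^D} (∏_{d=1}^D e_d) · γ(i₁+e₁j₁, …, i_D+e_Dj_D), where γ(k₁,…,k_D) = ∑_{n=1}^N ∏_{d=1}^D g^(d)(k_d, x_n^(d)). -/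
import Mathlib


/-- (Theorem 2, general D, entry formula) If each dimension satisfies
`φ⁽ᵈ⁾_i(x)φ⁽ᵈ⁾_j(x) = g⁽ᵈ⁾(i+j, x) - g⁽ᵈ⁾(i-j, x)` (1-based indices), then the
entry of `C = ∑ n, ⊗_d φ⁽ᵈ⁾(xₙ⁽ᵈ⁾)[φ⁽ᵈ⁾(xₙ⁽ᵈ⁾)]ᵀ` at `((i_d),(j_d))` equals
`∑_{e ∈ {-1,1}^D} (∏_d e_d) γ(i₁+e₁j₁, …, i_D+e_Dj_D)` with
`γ(k₁,…,k_D) = ∑ n, ∏ d, g⁽ᵈ⁾(k_d, xₙ⁽ᵈ⁾)`. Sign vectors are encoded by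
`ε : Fin D → Bool`, with `true ↦ 1` and `false ↦ -1`. -/
theorem precision_matrix_entry_formula_general {D N : ℕ} (m : Fin D → ℕ)
    (φ : ∀ d : Fin D, ℝ → Fin (m d) → ℝ)
    (g : Fin D → ℤ → ℝ → ℝ)
    (h : ∀ (d : Fin D) (x : ℝ) (i j : Fin (m d)),
      φ d x i * φ d x j = g d (((i : ℤ) + 1) + ((j : ℤ) + 1)) x
        - g d (((i : ℤ) + 1) - ((j : ℤ) + 1)) x)
    (x : Fin N → Fin D → ℝ) (i j : ∀ d : Fin D, Fin (m d)) :
    (∑ n : Fin N, ∏ d : Fin D, φ d (x n d) (i d) * φ d (x n d) (j d)) =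
      ∑ ε : Fin D → Bool, (∏ d : Fin D, (if ε d then (1 : ℝ) else -1)) *
        (fun k : Fin D → ℤ => ∑ n : Fin N, ∏ d : Fin D, g d (k d) (x n d))
          (fun d => ((i d : ℤ) + 1) + (if ε d then 1 else -1) * ((j d : ℤ) + 1)) := by
  simp only [Finset.mul_sum]
  rw [Finset.sum_comm]
  refine Finset.sum_congr rfl fun n _ => ?_
  calc (∏ d : Fin D, φ d (x n d) (i d) * φ d (x n d) (j d))
      = ∏ d : Fin D, ∑ b : Bool,
          (if b then (1:ℝ) else -1) *
            g d (((i d : ℤ) + 1) + (if b then 1 else -1) * ((j d : ℤ) + 1)) (x n d) := by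
        refine Finset.prod_congr rfl fun d _ => ?_
        rw [h]
        simp [Fintype.sum_bool]
        ring_nf
    _ = ∑ ε : Fin D → Bool, ∏ d : Fin D,
          (if ε d then (1:ℝ) else -1) *
            g d (((i d : ℤ) + 1) + (if ε d then 1 else -1) * ((j d : ℤ) + 1)) (x n d) :=
        Fintype.prod_sum _
    _ = _ := by
        refine Finset.sum_congr rfl fun ε _ => ?_
        rw [Finset.prod_mul_distrib]
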